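/- The map 𝓕 is monotonically non-increasing with respect to the elementwise order on ℝ^n and the Loewner order on symmetric m×m matrices: for all σ^{(1)}, σ^{(2)} ∈ ℝ^n_+ with σ^{(1)} ≤ σ^{(2)} (elementwise), the matrix 𝓕(σ^{(1)}) − 𝓕(σ^{(2)}) is positive semidefinite. -/

import Mathlib

/-!
Testing `𝓕(σ)` against `g ∈ ℝ^m` gives `L(w_σ)`, where `L = ∑ gⱼ lⱼ` and `w_σ` solves
`b_σ(w_σ, ·) = L`. For symmetric `B₁ ≥ 0` and `B₂ ≥ B₁` with solutions `w₁`, `w₂` of the same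
right-hand side `L`,
`L(w₁) - L(w₂) = B₁(w₁ - w₂, w₁ - w₂) + (B₂ - B₁)(w₂, w₂) ≥ 0`,
and `σ ↦ b_σ` is monotone because the `bᵢ` are positive semidefinite.
-/

open Matrix

section Pairing

variable {E : Type*} [NormedAddCommGroup E] [NormedSpace ℝ E] {ι : Type*}

def pairingMatrix (l : ι → E →L[ℝ] ℝ) (x : ι → E) : Matrix ι ι ℝ :=
  Matrix.of fun j k => l k (x j)

theorem apply_solution_comm {B : E →L[ℝ] E →L[ℝ] ℝ} (hB : ∀ x y, B x y = B y x)
    {l l' : E →L[ℝ] ℝ} {w w' : E} (hw : B w = l) (hw' : B w' = l') : l' w = l w' := by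
  rw [← hw, ← hw', hB]

theorem pairingMatrix_isHermitian {B : E →L[ℝ] E →L[ℝ] ℝ} (hB : ∀ x y, B x y = B y x)
    {l : ι → E →L[ℝ] ℝ} {x : ι → E} (hx : ∀ j, B (x j) = l j) :
    (pairingMatrix l x).IsHermitian := by
  ext j k
  exact apply_solution_comm hB (hx k) (hx j)

variable [Fintype ι]

theorem pairingMatrix_dotProduct_mulVec (l : ι → E →L[ℝ] ℝ) (x : ι → E) (g : ι → ℝ) :
    star g ⬝ᵥ pairingMatrix l x *ᵥ g = (∑ k, g k • l k) (∑ j, g j • x j) := by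
  simp only [pairingMatrix, dotProduct, mulVec, Matrix.of_apply, star_trivial, map_sum,
    map_smul, FunLike.coe_sum, Finset.sum_apply, FunLike.coe_smul,
    Pi.smul_apply, smul_eq_mul, Finset.mul_sum]
  exact Finset.sum_congr rfl fun _ _ => Finset.sum_congr rfl fun _ _ => by ring

theorem apply_solution_antitone {B₁ B₂ : E →L[ℝ] E →L[ℝ] ℝ} (hB₁ : ∀ x y, B₁ x y = B₁ y x)
    (hB₁_nonneg : ∀ x, 0 ≤ B₁ x x) (hB₁₂ : ∀ x, B₁ x x ≤ B₂ x x)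
    {L : E →L[ℝ] ℝ} {w₁ w₂ : E} (hw₁ : B₁ w₁ = L) (hw₂ : B₂ w₂ = L) : L w₂ ≤ L w₁ := by
  have key : L w₁ - L w₂ = B₁ (w₁ - w₂) (w₁ - w₂) + (B₂ w₂ w₂ - B₁ w₂ w₂) := by
    have h₂₁ : B₁ w₂ w₁ = L w₂ := by rw [hB₁, hw₁]
    simp only [map_sub, _root_.sub_apply]
    rw [h₂₁, hw₁, hw₂]
    ring
  linarith [hB₁_nonneg (w₁ - w₂), hB₁₂ w₂]

theorem posSemidef_pairingMatrix_sub {B₁ B₂ : E →L[ℝ] E →L[ℝ] ℝ}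
    (hB₁ : ∀ x y, B₁ x y = B₁ y x) (hB₂ : ∀ x y, B₂ x y = B₂ y x)
    (hB₁_nonneg : ∀ x, 0 ≤ B₁ x x) (hB₁₂ : ∀ x, B₁ x x ≤ B₂ x x)
    {l : ι → E →L[ℝ] ℝ} {x₁ x₂ : ι → E} (hx₁ : ∀ j, B₁ (x₁ j) = l j)
    (hx₂ : ∀ j, B₂ (x₂ j) = l j) :
    (pairingMatrix l x₁ - pairingMatrix l x₂).PosSemidef := by
  refine PosSemidef.of_dotProduct_mulVec_nonneg
    ((pairingMatrix_isHermitian hB₁ hx₁).sub (pairingMatrix_isHermitian hB₂ hx₂)) fun g => ?_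
  have hsol : ∀ {B : E →L[ℝ] E →L[ℝ] ℝ} {x : ι → E}, (∀ j, B (x j) = l j) →
      B (∑ j, g j • x j) = ∑ j, g j • l j := fun hx => by simp only [map_sum, map_smul, hx]
  rw [sub_mulVec, dotProduct_sub, pairingMatrix_dotProduct_mulVec,
    pairingMatrix_dotProduct_mulVec, sub_nonneg]
  exact apply_solution_antitone hB₁ hB₁_nonneg hB₁₂ (hsol hx₁) (hsol hx₂)

end Pairing

section WeightedForm

variable {E : Type*} [NormedAddCommGroup E] [NormedSpace ℝ E] {ι : Type*} [Fintype ι]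
  (b₀ : E →L[ℝ] E →L[ℝ] ℝ) (b : ι → E →L[ℝ] E →L[ℝ] ℝ)

noncomputable def weightedForm (σ : ι → ℝ) : E →L[ℝ] E →L[ℝ] ℝ :=
  b₀ + ∑ i, σ i • b i

theorem weightedForm_apply (σ : ι → ℝ) (x y : E) :
    weightedForm b₀ b σ x y = b₀ x y + ∑ i, σ i * b i x y := by
  simp [weightedForm]

variable {b₀ b}

theorem weightedForm_comm (hb₀ : ∀ x y, b₀ x y = b₀ y x) (hb : ∀ i x y, b i x y = b i y x)
    (σ : ι → ℝ) (x y : E) : weightedForm b₀ b σ x y = weightedForm b₀ b σ y x := by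
  simp only [weightedForm_apply, hb₀ x y, hb _ x y]

theorem weightedForm_apply_self_nonneg (hb₀ : ∀ x, 0 ≤ b₀ x x) (hb : ∀ i x, 0 ≤ b i x x)
    {σ : ι → ℝ} (hσ : 0 ≤ σ) (x : E) : 0 ≤ weightedForm b₀ b σ x x := by
  rw [weightedForm_apply]
  exact add_nonneg (hb₀ x) (Finset.sum_nonneg fun i _ => mul_nonneg (hσ i) (hb i x))

theorem weightedForm_apply_self_mono (hb : ∀ i x, 0 ≤ b i x x) {σ₁ σ₂ : ι → ℝ} (hσ : σ₁ ≤ σ₂)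
    (x : E) : weightedForm b₀ b σ₁ x x ≤ weightedForm b₀ b σ₂ x x := by
  simp only [weightedForm_apply, add_le_add_iff_left]
  exact Finset.sum_le_sum fun i _ => mul_le_mul_of_nonneg_right (hσ i) (hb i x)

end WeightedForm

theorem stmt_11_general
    {H : Type*} [NormedAddCommGroup H] [InnerProductSpace ℝ H]
    {n m : ℕ}
    (b0 : H →L[ℝ] H →L[ℝ] ℝ) (b : Fin n → H →L[ℝ] H →L[ℝ] ℝ)
    (hb0symm : ∀ u v : H, b0 u v = b0 v u)
    (hb0pos : ∀ v : H, 0 ≤ b0 v v)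
    (hbsymm : ∀ i, ∀ u v : H, b i u v = b i v u)
    (hbpos : ∀ i, ∀ v : H, 0 ≤ b i v v)
    (u : (Fin n → ℝ) → (H →L[ℝ] ℝ) → H)
    (hu : ∀ σ : Fin n → ℝ, (∀ i, 0 < σ i) → ∀ l : H →L[ℝ] ℝ,
      ∀ v : H, b0 (u σ l) v + ∑ i, σ i * b i (u σ l) v = l v)
    (l : Fin m → (H →L[ℝ] ℝ)) :
    ∀ σ₁ σ₂ : Fin n → ℝ, (∀ i, 0 < σ₁ i) → (∀ i, 0 < σ₂ i) →
      (∀ i, σ₁ i ≤ σ₂ i) →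
      Matrix.PosSemidef
        (Matrix.of fun j k : Fin m => l k (u σ₁ (l j)) - l k (u σ₂ (l j))) := by
  intro σ₁ σ₂ hσ₁ hσ₂ hle
  have hsol : ∀ σ, (∀ i, 0 < σ i) → ∀ j, weightedForm b0 b σ (u σ (l j)) = l j :=
    fun σ hσ j => by ext v; rw [weightedForm_apply]; exact hu σ hσ (l j) v
  exact posSemidef_pairingMatrix_sub (weightedForm_comm hb0symm hbsymm σ₁)
    (weightedForm_comm hb0symm hbsymm σ₂)
    (weightedForm_apply_self_nonneg hb0pos hbpos fun i => (hσ₁ i).le)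
    (weightedForm_apply_self_mono hbpos hle) (hsol σ₁ hσ₁) (hsol σ₂ hσ₂)

/-- The map `𝓕` is monotonically non-increasing with respect to
the elementwise order on `ℝ^n` and the Loewner order on symmetric `m×m`
matrices: for all `σ⁽¹⁾, σ⁽²⁾ ∈ ℝ^n_+` with `σ⁽¹⁾ ≤ σ⁽²⁾` (elementwise), the
matrix `𝓕(σ⁽¹⁾) − 𝓕(σ⁽²⁾)` is positive semidefinite. -/
theorem stmt_11
    {H : Type*} [NormedAddCommGroup H] [InnerProductSpace ℝ H] [CompleteSpace H]
    {n m : ℕ}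
    (b0 : H →L[ℝ] H →L[ℝ] ℝ) (b : Fin n → H →L[ℝ] H →L[ℝ] ℝ)
    (hb0symm : ∀ u v : H, b0 u v = b0 v u)
    (hb0pos : ∀ v : H, 0 ≤ b0 v v)
    (hbsymm : ∀ i, ∀ u v : H, b i u v = b i v u)
    (hbpos : ∀ i, ∀ v : H, 0 ≤ b i v v)
    (C β : ℝ) (hβ : 0 < β) (hCβ : β ≤ C)
    (hcoer : ∀ v : H, β * ‖v‖ ^ 2 ≤ b0 v v + ∑ i, b i v v)
    (hbound : ∀ v : H, b0 v v + ∑ i, b i v v ≤ C * ‖v‖ ^ 2)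
    (u : (Fin n → ℝ) → (H →L[ℝ] ℝ) → H)
    (hu : ∀ σ : Fin n → ℝ, (∀ i, 0 < σ i) → ∀ l : H →L[ℝ] ℝ,
      ∀ v : H, b0 (u σ l) v + ∑ i, σ i * b i (u σ l) v = l v)
    (l : Fin m → (H →L[ℝ] ℝ)) :
    ∀ σ₁ σ₂ : Fin n → ℝ, (∀ i, 0 < σ₁ i) → (∀ i, 0 < σ₂ i) →
      (∀ i, σ₁ i ≤ σ₂ i) →
      Matrix.PosSemidef
        (Matrix.of fun j k : Fin m => l k (u σ₁ (l j)) - l k (u σ₂ (l j))) :=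
  stmt_11_general b0 b hb0symm hb0pos hbsymm hbpos u hu l
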